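/- Let h ∈ H and let f ∈ S be an idempotent such that h − 1 is associated with f, i.e. h − 1 = u·f for some u ∈ H. Put f' = 1 − f. Then for all y, y' ∈ f'Jf', the elements h + y and h + y' lie in the same superclass if and only if y and y' lie in the same G̃_{f'}-orbit in f'Jf'. -/
import Mathlib


/-- `g, g' ∈ G` lie in the same superclass: `g' - 1 = t * a * (g - 1) * b * t⁻¹` with
`t ∈ H = S^×` (both `t` and `t⁻¹` lie in `S`) and `a, b ∈ N = 1 + J`. -/
def SameSuperclass {F A : Type*} [Field F] [Ring A] [Algebra F A]
    (J : Ideal A) (S : Subalgebra F A) (g g' : A) : Prop :=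
  ∃ t : Aˣ, (t : A) ∈ S ∧ ((t⁻¹ : Aˣ) : A) ∈ S ∧
    ∃ a b : A, a - 1 ∈ J ∧ b - 1 ∈ J ∧
      g' - 1 = (t : A) * a * (g - 1) * b * ((t⁻¹ : Aˣ) : A)

/-- `x, y ∈ J_e = eJe` lie in the same `G̃_e`-orbit: `y = t * a * x * b * s` where
`t ∈ (eSe)ˣ` with inverse `s` (taken in `eAe`, so `t * s = s * t = e`), and
`a, b ∈ e + eJe`. -/
def SameOrbitJe {F A : Type*} [Field F] [Ring A] [Algebra F A]
    (J : Ideal A) (S : Subalgebra F A) (e x y : A) : Prop :=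
  ∃ t s : A, t ∈ S ∧ s ∈ S ∧ e * t = t ∧ t * e = t ∧ e * s = s ∧ s * e = s ∧
    t * s = e ∧ s * t = e ∧
    ∃ a b : A, a - e ∈ J ∧ e * a = a ∧ a * e = a ∧ b - e ∈ J ∧ e * b = b ∧ b * e = b ∧
      y = t * a * x * b * s

/-- Theorem 3.1, item 2: let `h ∈ H` and let `f ∈ S` be an idempotent with `h - 1`
associated with `f` (i.e. `h - 1 = u * f` for some `u ∈ H`); put `f' = 1 - f`.  Then for
`y, y' ∈ f'Jf'` the elements `h + y` and `h + y'` lie in the same superclass iff `y` and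
`y'` lie in the same `G̃_{f'}`-orbit in `f'Jf'`. -/
theorem sameSuperclass_iff_sameOrbitJe
    {F A : Type*} [Field F] [Fintype F] [Ring A] [Algebra F A] [FiniteDimensional F A]
    (J : Ideal A) (hJ : J = (⊥ : Ideal A).jacobson)
    (hJr : ∀ x ∈ J, ∀ a : A, x * a ∈ J)
    (hred : ∀ a b : A, a * b - b * a ∈ J)
    (S : Subalgebra F A)
    (hS : IsCompl (Subalgebra.toSubmodule S) (Submodule.restrictScalars F J))
    (h : Aˣ) (hhS : (h : A) ∈ S) (hhS' : ((h⁻¹ : Aˣ) : A) ∈ S)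
    (f : A) (hf : IsIdempotentElem f) (hfS : f ∈ S)
    (hassoc : ∃ u : Aˣ, (u : A) ∈ S ∧ ((u⁻¹ : Aˣ) : A) ∈ S ∧ (h : A) - 1 = (u : A) * f)
    (y y' : A)
    (hy : y ∈ J) (h1y : (1 - f) * y = y) (hy1 : y * (1 - f) = y)
    (hy' : y' ∈ J) (h1y' : (1 - f) * y' = y') (hy'1 : y' * (1 - f) = y') :
    SameSuperclass J S ((h : A) + y) ((h : A) + y') ↔
      SameOrbitJe J S (1 - f) y y' := by
  classical
  -- S is commutative
  have hScomm : ∀ x ∈ S, ∀ z ∈ S, x * z = z * x := by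
    intro x hx z hz
    have h1 : x * z - z * x ∈ S := S.sub_mem (S.mul_mem hx hz) (S.mul_mem hz hx)
    have h2 : x * z - z * x ∈ J := hred x z
    have h0 : x * z - z * x = 0 := Submodule.disjoint_def.mp hS.disjoint _ h1 h2
    exact sub_eq_zero.mp h0
  -- elements of 1 + J are units (two-sided)
  have hunit : ∀ x ∈ J, ∃ c : A, (1 + x) * c = 1 ∧ c * (1 + x) = 1 := by
    intro x hx
    have hli : ∃ b : A, b * (1 + x) = 1 := by
      by_contra hcon
      push_neg at hcon
      have hne : Ideal.span {1 + x} ≠ ⊤ := by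
        intro htop
        have h1 : (1 : A) ∈ Ideal.span {(1 : A) + x} := htop ▸ Submodule.mem_top
        obtain ⟨b, hb⟩ := Submodule.mem_span_singleton.mp h1
        exact hcon b (by simpa [smul_eq_mul] using hb)
      obtain ⟨m, hm, hle⟩ := Ideal.exists_le_maximal _ hne
      have hxm : x ∈ m := by
        have hJm : J ≤ m := by rw [hJ]; exact sInf_le ⟨bot_le, hm⟩
        exact hJm hx
      have h1xm : (1 : A) + x ∈ m := hle (Ideal.subset_span rfl)
      have h1m : (1 : A) ∈ m := by
        have := m.sub_mem h1xm hxm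
        simpa using this
      exact hm.ne_top (m.eq_top_iff_one.mpr h1m)
    obtain ⟨b, hb⟩ := hli
    have hbinv : ∀ r : A, b * ((1 + x) * r) = r := fun r => by
      rw [← mul_assoc, hb, one_mul]
    have hinj : Function.Injective (LinearMap.mulLeft F ((1 : A) + x)) := by
      intro r r' hrr
      simp only [LinearMap.mulLeft_apply] at hrr
      rw [← hbinv r, ← hbinv r', hrr]
    have hsurj := (LinearMap.injective_iff_surjective).mp hinj
    obtain ⟨c, hc⟩ := hsurj 1
    simp only [LinearMap.mulLeft_apply] at hc
    have hcb : c = b := by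
      have h1 : b * ((1 + x) * c) = c := hbinv c
      rw [hc, mul_one] at h1
      exact h1.symm
    exact ⟨c, hc, by rw [hcb]; exact hb⟩
  -- corner inverse
  have corner : ∀ x : A, x ∈ J → f * x = x → x * f = x →
      ∃ w : A, f * w = w ∧ w * f = w ∧ (f + x) * w = f ∧ w * (f + x) = f := by
    intro x hx hfx hxf
    obtain ⟨c, hc1, hc2⟩ := hunit x hx
    have hcomm1 : f * (1 + x) = (1 + x) * f := by
      rw [mul_add, add_mul, mul_one, one_mul, hfx, hxf]
    have hfc : f * c = c * f := by
      calc f * c = (c * ((1 + x))) * (f * c) := by rw [hc2, one_mul]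
        _ = c * ((((1 : A) + x) * f) * c) := by simp only [mul_assoc]
        _ = c * ((f * ((1 : A) + x)) * c) := by rw [← hcomm1]
        _ = (c * f) * (((1 : A) + x) * c) := by simp only [mul_assoc]
        _ = c * f := by rw [hc1, mul_one]
    refine ⟨f * c, ?_, ?_, ?_, ?_⟩
    · rw [← mul_assoc, hf]
    · rw [mul_assoc, ← hfc, ← mul_assoc, hf]
    · have hfx1 : (f + x) = ((1 : A) + x) * f := by rw [add_mul, one_mul, hxf]
      calc (f + x) * (f * c) = (((1 : A) + x) * f) * (f * c) := by rw [hfx1]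
        _ = ((1 : A) + x) * ((f * f) * c) := by simp only [mul_assoc]
        _ = ((1 : A) + x) * (f * c) := by rw [hf]
        _ = ((1 : A) + x) * (c * f) := by rw [hfc]
        _ = (((1 : A) + x) * c) * f := by simp only [mul_assoc]
        _ = f := by rw [hc1, one_mul]
    · have hfx1 : (f + x) = f * ((1 : A) + x) := by rw [mul_add, mul_one, hfx]
      calc (f * c) * (f + x) = (f * c) * (f * ((1 : A) + x)) := by rw [hfx1]
        _ = f * ((c * f) * ((1 : A) + x)) := by simp only [mul_assoc]
        _ = f * ((f * c) * ((1 : A) + x)) := by rw [hfc]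
        _ = (f * f) * (c * ((1 : A) + x)) := by simp only [mul_assoc]
        _ = f := by rw [hf, hc2, mul_one]
  obtain ⟨u, huS, huiS, hufeq⟩ := hassoc
  set e : A := 1 - f with he
  have heS : e ∈ S := S.sub_mem S.one_mem hfS
  have hff : f * f = f := hf
  have hef : e * f = 0 := by rw [he, sub_mul, one_mul, hff, sub_self]
  have hfe : f * e = 0 := by rw [he, mul_sub, mul_one, hff, sub_self]
  have hee : e * e = e := by
    rw [he, mul_sub, mul_one, sub_mul, one_mul, hff, sub_self, sub_zero]
  set v : A := (u : A) * f with hv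
  have hvS : v ∈ S := S.mul_mem huS hfS
  have hfv : f * v = v := by rw [hv, ← mul_assoc, hScomm f hfS _ huS, mul_assoc, hff]
  have hvf : v * f = v := by rw [hv, mul_assoc, hff]
  have hev : e * v = 0 := by rw [hv, ← mul_assoc, hScomm e heS _ huS, mul_assoc, hef, mul_zero]
  have hve : v * e = 0 := by rw [hv, mul_assoc, hfe, mul_zero]
  have hfy : f * y = 0 := by rw [← h1y, ← mul_assoc, hfe, zero_mul]
  have hyf : y * f = 0 := by rw [← hy1, mul_assoc, hef, mul_zero]
  have hfy' : f * y' = 0 := by rw [← h1y', ← mul_assoc, hfe, zero_mul]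
  have hy'f : y' * f = 0 := by rw [← hy'1, mul_assoc, hef, mul_zero]
  have mkl : ∀ p q r : A, p * q = r → ∀ x : A, p * (q * x) = r * x := fun p q r hpq x => by
    rw [← mul_assoc, hpq]
  have hvy : (h : A) + y - 1 = v + y := by rw [add_sub_right_comm, hufeq]
  have hvy' : (h : A) + y' - 1 = v + y' := by rw [add_sub_right_comm, hufeq]
  constructor
  · -- forward direction
    rintro ⟨T, hTS, hTiS, a, b, haJ, hbJ, heq⟩
    set t : A := (T : A) * e with htdef
    set s : A := ((T⁻¹ : Aˣ) : A) * e with hsdef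
    have hTe : e * (T : A) = (T : A) * e := hScomm e heS _ hTS
    have hTie : e * ((T⁻¹ : Aˣ) : A) = ((T⁻¹ : Aˣ) : A) * e := hScomm e heS _ hTiS
    have hfT : f * (T : A) = (T : A) * f := hScomm f hfS _ hTS
    have hfTi : f * ((T⁻¹ : Aˣ) : A) = ((T⁻¹ : Aˣ) : A) * f := hScomm f hfS _ hTiS
    have het : e * t = t := by rw [htdef, ← mul_assoc, hTe, mul_assoc, hee]
    have hte : t * e = t := by rw [htdef, mul_assoc, hee]
    have hes : e * s = s := by rw [hsdef, ← mul_assoc, hTie, mul_assoc, hee]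
    have hse : s * e = s := by rw [hsdef, mul_assoc, hee]
    have htS : t ∈ S := S.mul_mem hTS heS
    have hsS : s ∈ S := S.mul_mem hTiS heS
    have hts : t * s = e := by
      calc t * s = (T : A) * ((e * ((T⁻¹ : Aˣ) : A)) * e) := by
            rw [htdef, hsdef]; simp only [mul_assoc]
        _ = (T : A) * ((((T⁻¹ : Aˣ) : A) * e) * e) := by rw [hTie]
        _ = (T : A) * (((T⁻¹ : Aˣ) : A) * e) := by rw [mul_assoc, hee]
        _ = e := by rw [← mul_assoc, Units.mul_inv, one_mul]
    have hst : s * t = e := by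
      calc s * t = ((T⁻¹ : Aˣ) : A) * ((e * (T : A)) * e) := by
            rw [htdef, hsdef]; simp only [mul_assoc]
        _ = ((T⁻¹ : Aˣ) : A) * (((T : A) * e) * e) := by rw [hTe]
        _ = ((T⁻¹ : Aˣ) : A) * ((T : A) * e) := by rw [mul_assoc, hee]
        _ = e := by rw [← mul_assoc, Units.inv_mul, one_mul]
    set z : A := (T : A) * y * ((T⁻¹ : Aˣ) : A) with hzdef
    have hzJ : z ∈ J := hJr _ (J.mul_mem_left _ hy) _
    have hez : e * z = z := by
      rw [hzdef]; simp only [← mul_assoc]; rw [hTe, mul_assoc (T : A) e y, h1y]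
    have hze : z * e = z := by
      rw [hzdef]; simp only [mul_assoc]; rw [← hTie, ← mul_assoc y e, hy1]
    have hfz : f * z = 0 := by
      rw [hzdef]; simp only [← mul_assoc]; rw [hfT, mul_assoc (T : A) f y, hfy,
        mul_zero, zero_mul]
    have hzf : z * f = 0 := by
      rw [hzdef]; simp only [mul_assoc]; rw [← hfTi, ← mul_assoc y f, hyf, zero_mul, mul_zero]
    have htys : t * (y * s) = z := by
      rw [htdef, hsdef, hzdef]; simp only [mul_assoc]
      rw [← mul_assoc e y, h1y, ← hTie, ← mul_assoc y e, hy1]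
    set P : A := (T : A) * a * ((T⁻¹ : Aˣ) : A) - 1 with hPdef
    set Q : A := (T : A) * b * ((T⁻¹ : Aˣ) : A) - 1 with hQdef
    have hPJ : P ∈ J := by
      have h' : P = (T : A) * ((a - 1) * ((T⁻¹ : Aˣ) : A)) := by
        rw [hPdef, sub_mul, one_mul, mul_sub, ← mul_assoc,
          show (T : A) * ((T⁻¹ : Aˣ) : A) = 1 from Units.mul_inv T]
      rw [h']; exact J.mul_mem_left _ (hJr _ haJ _)
    have hQJ : Q ∈ J := by
      have h' : Q = (T : A) * ((b - 1) * ((T⁻¹ : Aˣ) : A)) := by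
        rw [hQdef, sub_mul, one_mul, mul_sub, ← mul_assoc,
          show (T : A) * ((T⁻¹ : Aˣ) : A) = 1 from Units.mul_inv T]
      rw [h']; exact J.mul_mem_left _ (hJr _ hbJ _)
    have h1P : (1 : A) + P = (T : A) * a * ((T⁻¹ : Aˣ) : A) := by rw [hPdef]; abel
    have h1Q : (1 : A) + Q = (T : A) * b * ((T⁻¹ : Aˣ) : A) := by rw [hQdef]; abel
    have hTv : ∀ x : A, ((T⁻¹ : Aˣ) : A) * (v * ((T : A) * x)) = v * x := by
      intro x
      rw [← mul_assoc v, hScomm v hvS _ hTS, mul_assoc (T : A) v x,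
        Units.inv_mul_cancel_left]
    have hTz : ∀ x : A, ((T⁻¹ : Aˣ) : A) * (z * ((T : A) * x)) = y * x := by
      intro x
      rw [hzdef]
      simp only [mul_assoc, Units.inv_mul_cancel_left]
    have hE : v + y' = (1 + P) * ((v + z) * (1 + Q)) := by
      rw [hvy, hvy'] at heq
      rw [heq, h1P, h1Q]
      simp only [mul_add, add_mul, mul_assoc, Units.inv_mul_cancel_left, hTv, hTz]
    -- extraction of the block equations
    have hy'ee : e * ((v + y') * e) = y' := by
      simp only [add_mul, hve, hy'1, mul_add, mul_zero, h1y', zero_add]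
    have hiii0 : e * ((v + y') * f) = 0 := by
      simp only [add_mul, hvf, hy'f, add_zero, mul_add, hev, mul_zero, zero_add]
    have hiv : y' = e * (((1 + P) * ((v + z) * (1 + Q))) * e) := by
      rw [← hE]; exact hy'ee.symm
    have hiii : e * (((1 + P) * ((v + z) * (1 + Q))) * f) = 0 := by
      rw [← hE]; exact hiii0
    simp only [mul_add, add_mul, mul_one, one_mul, mul_assoc,
      hee, mkl e e e hee, hef, mkl e f 0 hef, hfe, mkl f e 0 hfe, hff, mkl f f f hff,
      hev, mkl e v 0 hev, hve, mkl v e 0 hve, hfv, mkl f v v hfv, hvf, mkl v f v hvf,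
      hez, mkl e z z hez, hze, mkl z e z hze, hfz, mkl f z 0 hfz, hzf, mkl z f 0 hzf,
      h1y', mkl e y' y' h1y', hy'1, mkl y' e y' hy'1,
      zero_mul, mul_zero, add_zero, zero_add] at hiii hiv
    obtain ⟨w, hfw, hwf, hw1, hw2⟩ := corner (f * (Q * f))
      (J.mul_mem_left f (hJr _ hQJ f))
      (by rw [← mul_assoc, hff])
      (by simp only [mul_assoc, hff])
    have hmf : (e * (P * v)) * f = e * (P * v) := by simp only [mul_assoc, hvf]
    have hmq : (e * (P * v)) * (f * (Q * f)) = e * (P * (v * (Q * f))) := by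
      simp only [mul_assoc, mkl v f v hvf]
    have hkey : e * (P * v) = -((z * (Q * f) + e * (P * (z * (Q * f)))) * w) := by
      have c1 : e * (P * v) = (e * (P * v)) * ((f + f * (Q * f)) * w) := by
        rw [hw1]; exact hmf.symm
      have c2 : (e * (P * v)) * ((f + f * (Q * f)) * w)
          = (e * (P * v) + e * (P * (v * (Q * f)))) * w := by
        rw [← mul_assoc, mul_add, hmf, hmq]
      have c3 : (e * (P * v) + e * (P * (v * (Q * f)))) * w
          = -((z * (Q * f) + e * (P * (z * (Q * f)))) * w) := by
        have h3 : (e * (P * v) + e * (P * (v * (Q * f)))) * w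
            + (z * (Q * f) + e * (P * (z * (Q * f)))) * w = 0 := by
          rw [← add_mul, add_assoc, hiii, zero_mul]
        exact eq_neg_of_add_eq_zero_left h3
      exact c1.trans (c2.trans c3)
    have hsplit : e * (P * (v * (Q * e))) = (e * (P * v)) * (Q * e) := by
      simp only [mul_assoc]
    rw [hsplit, hkey] at hiv
    have htys' : ∀ x : A, t * (y * (s * x)) = z * x := fun x => by
      rw [show y * (s * x) = (y * s) * x from (mul_assoc y s x).symm,
        show t * ((y * s) * x) = (t * (y * s)) * x from (mul_assoc t _ x).symm, htys]
    refine ⟨t, s, htS, hsS, het, hte, hes, hse, hts, hst,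
      e + s * (P * t), e + (s * (Q * t) - s * (Q * (f * (w * (f * (Q * t)))))),
      ?_, ?_, ?_, ?_, ?_, ?_, ?_⟩
    · rw [add_sub_cancel_left]; exact J.mul_mem_left _ (hJr _ hPJ _)
    · rw [mul_add, hee, ← mul_assoc, hes]
    · simp only [add_mul, mul_assoc, hee, hte]
    · rw [add_sub_cancel_left]
      exact J.sub_mem (J.mul_mem_left _ (hJr _ hQJ _)) (J.mul_mem_left _ (hJr _ hQJ _))
    · simp only [mul_add, mul_sub, hee, mkl e s s hes]
    · simp only [add_mul, sub_mul, mul_assoc, hee, hte]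
    · rw [hiv]
      simp only [mul_add, add_mul, mul_sub, sub_mul, neg_mul, mul_neg, mul_assoc,
        hte, mkl t e t hte, hes, mkl e s s hes, hts, mkl t s e hts, hy1, mkl y e y hy1,
        hee, mkl e e e hee, htys, htys', hfw, mkl f w w hfw, mkl w f w hwf,
        hez, mkl e z z hez, hze, mkl z e z hze]
      abel
  · -- backward direction
    rintro ⟨t, s, htS, hsS, het, hte, hes, hse, hts, hst,
      a, b, haJ, hea, hae, hbJ, heb, hbe, hyeq⟩
    have hft : f * t = 0 := by rw [← het, ← mul_assoc, hfe, zero_mul]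
    have htf : t * f = 0 := by rw [← hte, mul_assoc, hef, mul_zero]
    have hfs : f * s = 0 := by rw [← hes, ← mul_assoc, hfe, zero_mul]
    have hsf : s * f = 0 := by rw [← hse, mul_assoc, hef, mul_zero]
    have hfa : f * a = 0 := by rw [← hea, ← mul_assoc, hfe, zero_mul]
    have haf : a * f = 0 := by rw [← hae, mul_assoc, hef, mul_zero]
    have hfb : f * b = 0 := by rw [← heb, ← mul_assoc, hfe, zero_mul]
    have hbf : b * f = 0 := by rw [← hbe, mul_assoc, hef, mul_zero]
    have hav : a * v = 0 := by rw [← hae, mul_assoc, hev, mul_zero]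
    have hvb : v * b = 0 := by rw [← heb, ← mul_assoc, hve, zero_mul]
    have htv : t * v = 0 := by rw [← hte, mul_assoc, hev, mul_zero]
    have hvs : v * s = 0 := by rw [← hes, ← mul_assoc, hve, zero_mul]
    have hU1 : (t + f) * (s + f) = 1 := by
      rw [mul_add, add_mul, add_mul, hts, htf, hfs, hff, add_zero, zero_add, he]
      abel
    have hU2 : (s + f) * (t + f) = 1 := by
      rw [mul_add, add_mul, add_mul, hst, hsf, hft, hff, add_zero, zero_add, he]
      abel
    refine ⟨⟨t + f, s + f, hU1, hU2⟩, S.add_mem htS hfS, S.add_mem hsS hfS,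
      a + f, b + f, ?_, ?_, ?_⟩
    · have hrw : a + f - 1 = a - e := by rw [he]; abel
      rw [hrw]; exact haJ
    · have hrw : b + f - 1 = b - e := by rw [he]; abel
      rw [hrw]; exact hbJ
    · show (h : A) + y' - 1 = (t + f) * (a + f) * ((h : A) + y - 1) * (b + f) * (s + f)
      rw [hvy, hvy', hyeq]
      simp only [mul_add, add_mul, mul_assoc,
        mkl f f f hff, hff, mkl f a 0 hfa, hfa, mkl a f 0 haf, haf,
        mkl f t 0 hft, hft, mkl t f 0 htf, htf, mkl f s 0 hfs, hfs, mkl s f 0 hsf, hsf,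
        mkl f b 0 hfb, hfb, mkl b f 0 hbf, hbf, mkl f v v hfv, hfv, mkl v f v hvf, hvf,
        mkl f y 0 hfy, hfy, mkl y f 0 hyf, hyf, mkl a v 0 hav, hav, mkl v b 0 hvb, hvb,
        mkl t v 0 htv, htv, mkl v s 0 hvs, hvs,
        zero_mul, mul_zero, add_zero, zero_add]
      abel
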